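/- arXiv:2007.12521 — 2 statements merged into one kernel-verified Lean document; each statement's English description precedes it below -/
import Mathlib

section
/- For ϑ₀ > -1/2, α > 0, Δ > 0, suppose the joint measure Q of two consecutive observations satisfies: ∫∫ x² dQ = (ϑ₀+1)/α, ∫∫ x⁴ dQ = (ϑ₀+1)(ϑ₀+2)/α², ∫∫ x² y² dQ = (ϑ₀+1)²/α² + e^{−2αΔ}(ϑ₀+1)/α², and Q is symmetric in (x,y). Then ∫∫ g(x,y,ϑ₀)² dQ = (1 − e^{−4αΔ})/(ϑ₀+1), where g(x,y,ϑ) = 1 − αy²/(ϑ+1) − e^{−2αΔ}(1 − αx²/(ϑ+1)). -/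
open MeasureTheory Real

/-! The integrand is the square of an affine function of `x²` and `y²`, so its integral is a
polynomial in the moments `∫ x²`, `∫ y²`, `∫ x⁴`, `∫ y⁴`, `∫ x²y²`; the swap symmetry of `Q`
turns the moments of `y` into those of `x`, and the given values make the polynomial collapse. -/

lemma integral_sq_add_mul_add_mul {Ω : Type*} [MeasurableSpace Ω] {μ : Measure Ω}
    [IsProbabilityMeasure μ]
    {X Y : Ω → ℝ} (hX : Integrable X μ) (hY : Integrable Y μ)
    (hXX : Integrable (fun ω => X ω ^ 2) μ) (hYY : Integrable (fun ω => Y ω ^ 2) μ)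
    (hXY : Integrable (fun ω => X ω * Y ω) μ) (a b c : ℝ) :
    ∫ ω, (a + b * X ω + c * Y ω) ^ 2 ∂μ
      = a ^ 2 + 2 * a * b * ∫ ω, X ω ∂μ + 2 * a * c * ∫ ω, Y ω ∂μ
        + b ^ 2 * ∫ ω, X ω ^ 2 ∂μ + c ^ 2 * ∫ ω, Y ω ^ 2 ∂μ
        + 2 * b * c * ∫ ω, X ω * Y ω ∂μ := by
  have hexpand : ∀ ω, (a + b * X ω + c * Y ω) ^ 2
      = a ^ 2 + 2 * a * b * X ω + 2 * a * c * Y ω + b ^ 2 * X ω ^ 2 + c ^ 2 * Y ω ^ 2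
        + 2 * b * c * (X ω * Y ω) := fun ω => by ring
  simp only [hexpand]
  rw [integral_add, integral_add, integral_add, integral_add, integral_add]
  · simp only [integral_const_mul, integral_const, probReal_univ, smul_eq_mul, one_mul]
  all_goals fun_prop

section SwapInvariant

variable {α E : Type*} [MeasurableSpace α] [NormedAddCommGroup E] {μ : Measure (α × α)}

lemma integral_comp_snd_of_map_swap_eq [NormedSpace ℝ E] (hμ : μ.map Prod.swap = μ)
    (f : α → E) : ∫ p, f p.2 ∂μ = ∫ p, f p.1 ∂μ :=
  (MeasurePreserving.mk measurable_swap hμ).integral_comp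
    MeasurableEquiv.prodComm.measurableEmbedding (fun p => f p.1)

lemma MeasureTheory.Integrable.comp_snd_of_map_swap_eq (hμ : μ.map Prod.swap = μ) {f : α → E}
    (hf : Integrable (fun p => f p.1) μ) : Integrable (fun p => f p.2) μ :=
  (MeasurePreserving.mk measurable_swap hμ).integrable_comp_of_integrable hf

end SwapInvariant

theorem quadratic_variation_term_general
    (ϑ₀ α Δ : ℝ) (hϑ : ϑ₀ > -1/2) (hα : α > 0)
    (Q : Measure (ℝ × ℝ)) [IsProbabilityMeasure Q]
    (hsymm : Q.map Prod.swap = Q)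
    (hI2 : Integrable (fun p : ℝ × ℝ => p.1^2) Q)
    (hI4 : Integrable (fun p : ℝ × ℝ => p.1^4) Q)
    (hI22 : Integrable (fun p : ℝ × ℝ => p.1^2 * p.2^2) Q)
    (hm2 : ∫ p : ℝ × ℝ, p.1^2 ∂Q = (ϑ₀ + 1) / α)
    (hm4 : ∫ p : ℝ × ℝ, p.1^4 ∂Q = (ϑ₀ + 1) * (ϑ₀ + 2) / α^2)
    (hm22 : ∫ p : ℝ × ℝ, p.1^2 * p.2^2 ∂Q
      = (ϑ₀ + 1)^2 / α^2 + Real.exp (-2*α*Δ) * (ϑ₀ + 1) / α^2) :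
    ∫ p : ℝ × ℝ,
        (1 - α * p.2^2 / (ϑ₀ + 1)
          - Real.exp (-2*α*Δ) * (1 - α * p.1^2 / (ϑ₀ + 1)))^2 ∂Q
      = (1 - Real.exp (-4*α*Δ)) / (ϑ₀ + 1) := by
  set E := Real.exp (-2*α*Δ)
  have hE2 : Real.exp (-4*α*Δ) = E ^ 2 := by rw [← Real.exp_nat_mul]; ring_nf
  have hpow (x : ℝ) : (x ^ 2) ^ 2 = x ^ 4 := by ring
  have hc : ϑ₀ + 1 ≠ 0 := by linarith
  have hα0 : α ≠ 0 := hα.ne'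
  have haffine (p : ℝ × ℝ) : 1 - α * p.2^2 / (ϑ₀ + 1) - E * (1 - α * p.1^2 / (ϑ₀ + 1))
      = (1 - E) + (E * α / (ϑ₀ + 1)) * p.1^2 + (-α / (ϑ₀ + 1)) * p.2^2 := by ring
  have hI2' : Integrable (fun p : ℝ × ℝ => p.2 ^ 2) Q :=
    hI2.comp_snd_of_map_swap_eq (f := (· ^ 2)) hsymm
  have hI4' : Integrable (fun p : ℝ × ℝ => p.2 ^ 4) Q :=
    hI4.comp_snd_of_map_swap_eq (f := (· ^ 4)) hsymm
  simp only [haffine]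
  rw [integral_sq_add_mul_add_mul hI2 hI2' (by simpa only [hpow]) (by simpa only [hpow]) hI22]
  simp only [hpow, integral_comp_snd_of_map_swap_eq hsymm (fun x : ℝ => x ^ 2),
    integral_comp_snd_of_map_swap_eq hsymm (fun x : ℝ => x ^ 4), hm2, hm4, hm22, hE2]
  field_simp
  ring

theorem quadratic_variation_term
    (ϑ₀ α Δ : ℝ) (hϑ : ϑ₀ > -1/2) (hα : α > 0) (hΔ : Δ > 0)
    (Q : Measure (ℝ × ℝ)) [IsProbabilityMeasure Q]
    (hsymm : Q.map Prod.swap = Q)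
    (hI2 : Integrable (fun p : ℝ × ℝ => p.1^2) Q)
    (hI4 : Integrable (fun p : ℝ × ℝ => p.1^4) Q)
    (hI22 : Integrable (fun p : ℝ × ℝ => p.1^2 * p.2^2) Q)
    (hm2 : ∫ p : ℝ × ℝ, p.1^2 ∂Q = (ϑ₀ + 1) / α)
    (hm4 : ∫ p : ℝ × ℝ, p.1^4 ∂Q = (ϑ₀ + 1) * (ϑ₀ + 2) / α^2)
    (hm22 : ∫ p : ℝ × ℝ, p.1^2 * p.2^2 ∂Q
      = (ϑ₀ + 1)^2 / α^2 + Real.exp (-2*α*Δ) * (ϑ₀ + 1) / α^2) :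
    ∫ p : ℝ × ℝ,
        (1 - α * p.2^2 / (ϑ₀ + 1)
          - Real.exp (-2*α*Δ) * (1 - α * p.1^2 / (ϑ₀ + 1)))^2 ∂Q
      = (1 - Real.exp (-4*α*Δ)) / (ϑ₀ + 1) :=
  quadratic_variation_term_general ϑ₀ α Δ hϑ hα Q hsymm hI2 hI4 hI22 hm2 hm4 hm22
end

section
/- Fix ϑ > -1/2 and set, for real β₁, β₂ with (ϑ+2)β₁ + β₂ ≠ 0, R(β₁,β₂) = (ϑ+1)(ϑ+2) · ((ϑ+2)β₁² + 2β₂²) / ((ϑ+2)β₁ + β₂)². Then R(β₁,β₂) ≥ 2(ϑ+1)(ϑ+2)/(2ϑ+5) for all such (β₁,β₂), with equality if and only if β₁ = 2β₂ ≠ 0. -/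
/-! With `a = ϑ + 2 > 0`, the whole statement reduces to the identity
`(2a + 1)(a β₁² + 2 β₂²) - 2 (a β₁ + β₂)² = a (β₁ - 2 β₂)²`,
a sharp instance of the Cauchy–Schwarz inequality `(a β₁ + β₂)² ≤ (a β₁² + 2 β₂²)(a + 1/2)`. -/

namespace LimitingVariance

variable {a x y : ℝ}

theorem weighted_sq_sub_sq (a x y : ℝ) :
    (2 * a + 1) * (a * x ^ 2 + 2 * y ^ 2) - 2 * (a * x + y) ^ 2 = a * (x - 2 * y) ^ 2 := by
  ring

theorem weighted_ratio_sub_eq (ha : 0 < a) (hne : a * x + y ≠ 0) :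
    (a * x ^ 2 + 2 * y ^ 2) / (a * x + y) ^ 2 - 2 / (2 * a + 1)
      = a * (x - 2 * y) ^ 2 / ((2 * a + 1) * (a * x + y) ^ 2) := by
  have h2a : 2 * a + 1 ≠ 0 := by positivity
  rw [div_sub_div _ _ (pow_ne_zero 2 hne) h2a, ← weighted_sq_sub_sq]
  ring

theorem two_div_le_weighted_ratio (ha : 0 < a) (hne : a * x + y ≠ 0) :
    2 / (2 * a + 1) ≤ (a * x ^ 2 + 2 * y ^ 2) / (a * x + y) ^ 2 := by
  rw [← sub_nonneg, weighted_ratio_sub_eq ha hne]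
  positivity

theorem weighted_ratio_eq_iff (ha : 0 < a) (hne : a * x + y ≠ 0) :
    (a * x ^ 2 + 2 * y ^ 2) / (a * x + y) ^ 2 = 2 / (2 * a + 1) ↔ x = 2 * y := by
  rw [← sub_eq_zero, weighted_ratio_sub_eq ha hne, div_eq_zero_iff,
    or_iff_left (by positivity), mul_eq_zero, or_iff_right ha.ne', sq_eq_zero_iff, sub_eq_zero]

end LimitingVariance

open LimitingVariance in
theorem limiting_variance_minimum
    (ϑ : ℝ) (hϑ : ϑ > -1/2) :
    ∀ β₁ β₂ : ℝ, (ϑ + 2) * β₁ + β₂ ≠ 0 →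
      ((ϑ + 1) * (ϑ + 2) * ((ϑ + 2) * β₁^2 + 2 * β₂^2) / ((ϑ + 2) * β₁ + β₂)^2
          ≥ 2 * (ϑ + 1) * (ϑ + 2) / (2*ϑ + 5)) ∧
      ((ϑ + 1) * (ϑ + 2) * ((ϑ + 2) * β₁^2 + 2 * β₂^2) / ((ϑ + 2) * β₁ + β₂)^2
          = 2 * (ϑ + 1) * (ϑ + 2) / (2*ϑ + 5)
        ↔ β₁ = 2 * β₂ ∧ β₂ ≠ 0) := by
  intro β₁ β₂ hne
  have ha : 0 < ϑ + 2 := by linarith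
  have hc : 0 < (ϑ + 1) * (ϑ + 2) := by nlinarith
  have hR : (ϑ + 1) * (ϑ + 2) * ((ϑ + 2) * β₁^2 + 2 * β₂^2) / ((ϑ + 2) * β₁ + β₂)^2
      = (ϑ + 1) * (ϑ + 2) * (((ϑ + 2) * β₁^2 + 2 * β₂^2) / ((ϑ + 2) * β₁ + β₂)^2) :=
    mul_div_assoc _ _ _
  have hbound : 2 * (ϑ + 1) * (ϑ + 2) / (2*ϑ + 5)
      = (ϑ + 1) * (ϑ + 2) * (2 / (2 * (ϑ + 2) + 1)) := by ring
  have hβ₂ (h : β₁ = 2 * β₂) : β₂ ≠ 0 := fun h0 => hne (by rw [h, h0]; ring)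
  rw [hR, hbound, ge_iff_le, mul_le_mul_iff_right₀ hc, (mul_right_injective₀ hc.ne').eq_iff,
    weighted_ratio_eq_iff ha hne]
  exact ⟨two_div_le_weighted_ratio ha hne, ⟨fun h => ⟨h, hβ₂ h⟩, And.left⟩⟩
end
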